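/- Let 0 < s < 1 and μ > 0. Then the integral A(s,μ) := ∫_0^∞ ρ^{s-1}·[ ((1+s)ρ/(1+ρ))·( (μ/(1+ρ))/tanh(μ/(1+ρ)) − 1 ) − ((1−s)/(1+ρ))·( (ρμ/(1+ρ))/tanh(ρμ/(1+ρ)) − 1 ) ]·( (ρμ/(1+ρ))/sinh(ρμ/(1+ρ)) )^{1−s}·( (μ/(1+ρ))/sinh(μ/(1+ρ)) )^{1+s} dρ vanishes: A(s,μ) = 0. -/

import Mathlib

/-!
The integrand is an exact derivative. In the variable `u = μ / (1 + ρ)`, for which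
`ρ μ / (1 + ρ) = μ - u`, it is the `ρ`-derivative of
`(sinh (μ - u) / sinh u) ^ s * (ψ u * ψ (μ - u) - ψ μ)` with `ψ x = x / sinh x`.
This primitive tends to `0` as `ρ → 0⁺` (then `u → μ` and the prefactor vanishes since
`s > 0`) and as `ρ → ∞` (then `u → 0⁺`: the prefactor is `O(u ^ (-s))` while the bracket is
`O(u)`, because `ψ` is differentiable at `μ` and `ψ u = 1 + O(u ^ 2)`; and `s < 1`).
So the integral is `0` by the fundamental theorem of calculus on `(0, ∞)`.
-/

open MeasureTheory Real Filter Set Topology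

lemma tendsto_self_div_sinh_nhdsNE_zero : Tendsto (fun x => x / sinh x) (𝓝[≠] 0) (𝓝 1) := by
  have h := hasDerivAt_iff_tendsto_slope.mp (hasDerivAt_sinh 0)
  simp only [cosh_zero, slope_fun_def_field, sinh_zero, sub_zero] at h
  simpa using h.inv₀ one_ne_zero

lemma tendsto_sinh_sub_self_div_sq_nhdsGT_zero :
    Tendsto (fun x => (sinh x - x) / x ^ 2) (𝓝[>] 0) (𝓝 0) := by
  have hcosh := hasDerivAt_iff_tendsto_slope.mp (hasDerivAt_cosh 0)
  simp only [sinh_zero, slope_fun_def_field, cosh_zero, sub_zero] at hcosh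
  have hf : Continuous fun x => sinh x - x := by fun_prop
  have hg : Continuous fun x : ℝ => x ^ 2 := by fun_prop
  refine HasDerivAt.lhopital_zero_nhdsGT (f' := fun x => cosh x - 1) (g' := fun x => 2 * x)
    (Eventually.of_forall fun x => (hasDerivAt_sinh x).sub (hasDerivAt_id x))
    (Eventually.of_forall fun x => by simpa using hasDerivAt_pow 2 x)
    (eventually_nhdsWithin_of_forall fun x hx => by simp [hx.out.ne'])
    (by simpa using (hf.tendsto 0).mono_left nhdsWithin_le_nhds)
    (by simpa using (hg.tendsto 0).mono_left nhdsWithin_le_nhds) ?_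
  simpa [div_mul_eq_div_div, div_right_comm] using
    (hcosh.mono_left (nhdsGT_le_nhdsNE 0)).div_const 2

lemma tendsto_self_div_sinh_sub_one_div_nhdsGT_zero :
    Tendsto (fun x => (x / sinh x - 1) / x) (𝓝[>] 0) (𝓝 0) := by
  have h := (tendsto_sinh_sub_self_div_sq_nhdsGT_zero.mul
    (tendsto_self_div_sinh_nhdsNE_zero.mono_left (nhdsGT_le_nhdsNE 0))).neg
  rw [zero_mul, neg_zero] at h
  refine h.congr' (eventually_nhdsWithin_of_forall fun x hx => ?_)
  have := (sinh_pos_iff.mpr hx).ne'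
  have : x ≠ 0 := hx.out.ne'
  field_simp
  ring

lemma integral_Ioi_eq_zero_of_hasDerivAt_of_tendsto {f f' : ℝ → ℝ} {a m : ℝ}
    (hderiv : ∀ x ∈ Ioi a, HasDerivAt f (f' x) x) (ha : Tendsto f (𝓝[>] a) (𝓝 m))
    (htop : Tendsto f atTop (𝓝 m)) : ∫ x in Ioi a, f' x = 0 := by
  classical
  by_cases hint : IntegrableOn f' (Ioi a)
  · have hcont : ContinuousWithinAt (Function.update f a m) (Ici a) a := by
      rwa [continuousWithinAt_update_same, Ici_sdiff_left]
    have hderiv' : ∀ x ∈ Ioi a, HasDerivAt (Function.update f a m) (f' x) x := fun x hx =>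
      (hderiv x hx).congr_of_eventuallyEq <|
        (eventually_ne_nhds hx.out.ne').mono fun y hy => Function.update_of_ne hy _ _
    have htop' : Tendsto (Function.update f a m) atTop (𝓝 m) :=
      htop.congr' <| (eventually_ne_atTop a).mono fun y hy => (Function.update_of_ne hy _ _).symm
    rw [integral_Ioi_of_hasDerivAt_of_tendsto hcont hderiv' hint htop', Function.update_self,
      sub_self]
  · exact integral_undef hint

lemma rpow_sub_one_mul_rpow_one_sub_mul_rpow_one_add {a b c : ℝ} (ha : 0 < a) (hb : 0 < b)
    (hc : 0 < c) (s : ℝ) :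
    a ^ (s - 1) * b ^ (1 - s) * c ^ (1 + s) = (a * c / b) ^ s * (b * c / a) := by
  rw [rpow_sub_one ha.ne', rpow_sub hb, rpow_add hc, rpow_one, rpow_one,
    div_rpow (by positivity) hb.le, mul_rpow ha.le hc.le]
  have := (rpow_pos_of_pos hb s).ne'
  field_simp

noncomputable def integrand (s μ ρ : ℝ) : ℝ :=
  ρ ^ (s - 1) *
      (((1 + s) * ρ / (1 + ρ)) * ((μ / (1 + ρ)) / tanh (μ / (1 + ρ)) - 1) -
        ((1 - s) / (1 + ρ)) * ((ρ * μ / (1 + ρ)) / tanh (ρ * μ / (1 + ρ)) - 1)) *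
    ((ρ * μ / (1 + ρ)) / sinh (ρ * μ / (1 + ρ))) ^ (1 - s) *
    ((μ / (1 + ρ)) / sinh (μ / (1 + ρ))) ^ (1 + s)

noncomputable def antideriv (s μ u : ℝ) : ℝ :=
  (sinh (μ - u) / sinh u) ^ s * (u / sinh u * ((μ - u) / sinh (μ - u)) - μ / sinh μ)

lemma integrand_eq_rpow_mul (s : ℝ) {μ ρ : ℝ} (hμ : 0 < μ) (hρ : 0 < ρ) :
    integrand s μ ρ = (sinh (ρ * μ / (1 + ρ)) / sinh (μ / (1 + ρ))) ^ s *
      ((((1 + s) * ρ / (1 + ρ)) * ((μ / (1 + ρ)) / tanh (μ / (1 + ρ)) - 1) -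
          ((1 - s) / (1 + ρ)) * ((ρ * μ / (1 + ρ)) / tanh (ρ * μ / (1 + ρ)) - 1)) *
        (ρ * μ / (1 + ρ) / sinh (ρ * μ / (1 + ρ)) * (μ / (1 + ρ) / sinh (μ / (1 + ρ))) /
          ρ)) := by
  rw [integrand]
  set u := μ / (1 + ρ) with hu_def
  set v := ρ * μ / (1 + ρ) with hv_def
  have hu : 0 < u := by positivity
  have hv : 0 < v := by positivity
  have hsu := sinh_pos_iff.mpr hu
  have hsv := sinh_pos_iff.mpr hv
  have key := rpow_sub_one_mul_rpow_one_sub_mul_rpow_one_add hρ (div_pos hv hsv)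
    (div_pos hu hsu) s
  have hbase : ρ * (u / sinh u) / (v / sinh v) = sinh v / sinh u := by
    rw [hu_def, hv_def]
    field_simp
  rw [hbase] at key
  linear_combination
    (((1 + s) * ρ / (1 + ρ)) * (u / tanh u - 1) - ((1 - s) / (1 + ρ)) * (v / tanh v - 1)) * key

lemma hasDerivAt_antideriv_comp (s : ℝ) {μ ρ : ℝ} (hμ : 0 < μ) (hρ : 0 < ρ) :
    HasDerivAt (fun ρ => antideriv s μ (μ / (1 + ρ))) (integrand s μ ρ) ρ := by
  have hdu : HasDerivAt (fun ρ => μ / (1 + ρ)) (-(μ / (1 + ρ) ^ 2)) ρ :=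
    ((hasDerivAt_const ρ μ).div ((hasDerivAt_id ρ).const_add 1) (by positivity)).congr_deriv
      (by simp [neg_div])
  rw [integrand_eq_rpow_mul s hμ hρ]
  set u := μ / (1 + ρ) with hu_def
  set v := ρ * μ / (1 + ρ) with hv_def
  have hμu : μ = (1 + ρ) * u := by rw [hu_def]; field_simp
  have hvρ : v = ρ * u := by rw [hu_def, hv_def]; ring
  have hvu : μ - u = v := by rw [hvρ, hμu]; ring
  have hu : 0 < u := by positivity
  have hsu := sinh_pos_iff.mpr hu
  have hsv : 0 < sinh v := sinh_pos_iff.mpr (by positivity)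
  have hsvu : sinh (μ - u) ≠ 0 := hvu ▸ hsv.ne'
  have hdv : HasDerivAt (fun u => μ - u) (-1) u := (hasDerivAt_id u).const_sub μ
  have hX := (hdv.sinh.div (hasDerivAt_sinh u) hsu.ne').rpow_const (p := s)
    (Or.inl (div_ne_zero hsvu hsu.ne'))
  have hW := (((hasDerivAt_id u).div (hasDerivAt_sinh u) hsu.ne').mul
    (hdv.div hdv.sinh hsvu)).sub_const (μ / sinh μ)
  refine ((hX.mul hW).comp ρ hdu).congr_deriv ?_
  -- the addition formula is what absorbs the constant `μ / sinh μ` of the primitive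
  have hsμ : sinh μ = sinh u * cosh v + cosh u * sinh v := by
    rw [← sinh_add, ← hvu, add_sub_cancel]
  simp only [Pi.div_apply, Pi.mul_apply, id_eq, hvu, tanh_eq_sinh_div_cosh]
  rw [rpow_sub_one (by positivity), hsμ, hvρ, hμu]
  rw [hvρ] at hsv
  field_simp
  ring

lemma tendsto_antideriv_nhdsLT {s μ : ℝ} (hs : 0 < s) (hμ : μ ≠ 0) :
    Tendsto (antideriv s μ) (𝓝[<] μ) (𝓝 0) := by
  have hsμ : sinh μ ≠ 0 := sinh_ne_zero.mpr hμ
  have hpow : Tendsto (fun u => (sinh (μ - u) / sinh u) ^ s) (𝓝[<] μ) (𝓝 0) := by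
    have hc : ContinuousAt (fun u => (sinh (μ - u) / sinh u) ^ s) μ :=
      ((continuous_sinh.comp (continuous_sub_left μ)).continuousAt.div
        continuous_sinh.continuousAt hsμ).rpow_const (Or.inr hs.le)
    simpa [zero_rpow hs.ne'] using hc.tendsto.mono_left nhdsWithin_le_nhds
  have hsub : Tendsto (fun u => μ - u) (𝓝[<] μ) (𝓝[≠] 0) :=
    tendsto_nhdsWithin_iff.mpr
      ⟨by simpa using ((continuous_sub_left μ).tendsto μ).mono_left nhdsWithin_le_nhds,
        eventually_nhdsWithin_of_forall fun u hu => sub_ne_zero.mpr hu.out.ne'⟩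
  have hdiv : Tendsto (fun u => u / sinh u) (𝓝[<] μ) (𝓝 (μ / sinh μ)) :=
    ((continuous_id.continuousAt.div continuous_sinh.continuousAt hsμ).tendsto).mono_left
      nhdsWithin_le_nhds
  have h := hpow.mul ((hdiv.mul (tendsto_self_div_sinh_nhdsNE_zero.comp hsub)).sub_const
    (μ / sinh μ))
  rwa [mul_one, sub_self, mul_zero] at h

lemma tendsto_antideriv_nhdsGT_zero {s μ : ℝ} (hs : s < 1) (hμ : 0 < μ) :
    Tendsto (antideriv s μ) (𝓝[>] 0) (𝓝 0) := by
  have hsμ : sinh μ ≠ 0 := (sinh_pos_iff.mpr hμ).ne'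
  have hψ := HasDerivAt.comp_const_sub μ 0 <| by
    rw [sub_zero]; exact (hasDerivAt_id μ).div (hasDerivAt_sinh μ) hsμ
  have hslope := (hasDerivAt_iff_tendsto_slope.mp hψ).mono_left (nhdsGT_le_nhdsNE 0)
  simp only [slope_fun_def_field, sub_zero, Pi.div_apply, id_eq] at hslope
  have hsinh : Tendsto (fun u => sinh (μ - u)) (𝓝[>] 0) (𝓝 (sinh μ)) := by
    have hc : Continuous fun u => sinh (μ - u) := by fun_prop
    simpa using (hc.tendsto 0).mono_left nhdsWithin_le_nhds
  have hψ0 := tendsto_self_div_sinh_nhdsNE_zero.mono_left (nhdsGT_le_nhdsNE 0)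
  have hψμ : Tendsto (fun u => (μ - u) / sinh (μ - u)) (𝓝[>] 0) (𝓝 (μ / sinh μ)) := by
    have hsub : Tendsto (fun u => μ - u) (𝓝[>] 0) (𝓝 μ) := by
      simpa using ((continuous_sub_left μ).tendsto 0).mono_left nhdsWithin_le_nhds
    exact hsub.div hsinh hsμ
  have hbracket : Tendsto
      (fun u => (u / sinh u * ((μ - u) / sinh (μ - u)) - μ / sinh μ) / u) (𝓝[>] 0)
      (𝓝 (0 * (μ / sinh μ) + _)) :=
    ((tendsto_self_div_sinh_sub_one_div_nhdsGT_zero.mul hψμ).add hslope).congr fun u => by ring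
  have hpow : Tendsto (fun u => (sinh (μ - u) * (u / sinh u)) ^ s) (𝓝[>] 0)
      (𝓝 ((sinh μ * 1) ^ s)) := (hsinh.mul hψ0).rpow_const (Or.inl (by simpa using hsμ))
  have hvanish : Tendsto (fun u : ℝ => u ^ (1 - s)) (𝓝[>] 0) (𝓝 0) := by
    simpa [zero_rpow (sub_ne_zero.mpr hs.ne')] using
      ((continuous_id.tendsto 0).mono_left nhdsWithin_le_nhds).rpow_const
        (Or.inr (sub_nonneg.mpr hs.le))
  refine ((hpow.mul hvanish).mul hbracket).congr' ?_ |>.trans (by simp)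
  filter_upwards [Ioo_mem_nhdsGT hμ] with u ⟨hu, huμ⟩
  have hsu := sinh_pos_iff.mpr hu
  have hsv := sinh_nonneg_iff.mpr (sub_nonneg.mpr huμ.le)
  rw [antideriv, mul_rpow hsv (by positivity), div_rpow hsv hsu.le, div_rpow hu.le hsu.le,
    rpow_sub hu, rpow_one]
  have := (rpow_pos_of_pos hu s).ne'
  field_simp

lemma tendsto_div_one_add_nhdsGT_zero {μ : ℝ} (hμ : 0 < μ) :
    Tendsto (fun ρ => μ / (1 + ρ)) (𝓝[>] 0) (𝓝[<] μ) := by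
  have hc : ContinuousAt (fun ρ => μ / (1 + ρ)) 0 := by fun_prop (disch := norm_num)
  refine tendsto_nhdsWithin_iff.mpr ⟨by simpa using hc.tendsto.mono_left nhdsWithin_le_nhds, ?_⟩
  exact eventually_nhdsWithin_of_forall fun ρ hρ => div_lt_self hμ (lt_add_of_pos_right 1 hρ)

lemma tendsto_div_one_add_atTop {μ : ℝ} (hμ : 0 < μ) :
    Tendsto (fun ρ => μ / (1 + ρ)) atTop (𝓝[>] 0) := by
  refine tendsto_nhdsWithin_iff.mpr ⟨tendsto_const_nhds.div_atTop
    (tendsto_atTop_add_const_left _ 1 tendsto_id), ?_⟩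
  filter_upwards [eventually_gt_atTop 0] with ρ hρ
  exact div_pos hμ (by positivity)

theorem A_vanishes (s μ : ℝ) (hs0 : 0 < s) (hs1 : s < 1) (hμ : 0 < μ) :
    ∫ ρ in Set.Ioi (0 : ℝ),
        ρ ^ (s - 1) *
            (((1 + s) * ρ / (1 + ρ)) * ((μ / (1 + ρ)) / Real.tanh (μ / (1 + ρ)) - 1) -
              ((1 - s) / (1 + ρ)) *
                ((ρ * μ / (1 + ρ)) / Real.tanh (ρ * μ / (1 + ρ)) - 1)) *
          ((ρ * μ / (1 + ρ)) / Real.sinh (ρ * μ / (1 + ρ))) ^ (1 - s) *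
          ((μ / (1 + ρ)) / Real.sinh (μ / (1 + ρ))) ^ (1 + s) = 0 :=
  integral_Ioi_eq_zero_of_hasDerivAt_of_tendsto (f' := integrand s μ)
    (fun _ hρ => hasDerivAt_antideriv_comp s hμ hρ)
    ((tendsto_antideriv_nhdsLT hs0 hμ.ne').comp (tendsto_div_one_add_nhdsGT_zero hμ))
    ((tendsto_antideriv_nhdsGT_zero hs1 hμ).comp (tendsto_div_one_add_atTop hμ))
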